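/- Let (γ0, δ, g_p) ∈ G(Q_p) × G(L_n) × G(𝔨̄) satisfy g_p γ0 g_p^{−1} = Nm_nδ. Then the cochain τ ↦ b(γ0;δ;g_p)_τ := g_p^{−1} · Nm_{i(τ)}δ · τ(g_p), for τ in the Weil group W_{Q_p} with τ|_𝔨 = σ^{i(τ)}, is a cocycle in Z¹(W_{Q_p}, G_{γ0}(𝔨̄)). If g_p ∈ G(𝔨), this cocycle coincides with the cocycle b_τ = Nm_{i(τ)}b defined by b = g_p^{−1}δσ(g_p). -/
import Mathlib


/-- `Nm_n b = b · σ(b) ⋯ σ^{n-1}(b)`. -/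
def nmPow {G : Type*} [Group G] (σ : MulAut G) : ℕ → G → G
  | 0, _ => 1
  | n + 1, x => x * σ (nmPow σ n x)

/-- `Nm_m b` for `m : ℤ`; for `m < 0`, `Nm_m b := σ^m((Nm_{-m} b)⁻¹)`. -/
def nmZ {G : Type*} [Group G] (σ : MulAut G) (m : ℤ) (x : G) : G :=
  if 0 ≤ m then nmPow σ m.toNat x else (σ ^ m) (nmPow σ (-m).toNat x)⁻¹

namespace WeilAux

variable {G : Type*} [Group G] (σ : MulAut G) (x : G)

/-- The action of `ℤ` on `G` via powers of `σ`. -/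
def phi (σ : MulAut G) : Multiplicative ℤ →* MulAut G := zpowersHom _ σ

@[simp] lemma phi_apply (m : ℤ) : phi σ (Multiplicative.ofAdd m) = σ ^ m := rfl

/-- `(x, σ)` in `G ⋊ ℤ`. -/
def gen : G ⋊[phi σ] Multiplicative ℤ := ⟨x, Multiplicative.ofAdd 1⟩

lemma gen_pow_nat (k : ℕ) :
    (gen σ x) ^ k = ⟨nmPow σ k x, Multiplicative.ofAdd (k : ℤ)⟩ := by
  induction k with
  | zero => ext <;> simp [nmPow]
  | succ k ih =>
    rw [pow_succ', ih]
    ext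
    · simp [gen, SemidirectProduct.mul_left, nmPow, zpow_one]
    · simp [gen, SemidirectProduct.mul_right, ← ofAdd_add]
      push_cast
      ring

lemma gen_zpow (m : ℤ) :
    (gen σ x) ^ m = ⟨nmZ σ m x, Multiplicative.ofAdd m⟩ := by
  cases m with
  | ofNat k =>
    rw [Int.ofNat_eq_natCast, zpow_natCast, gen_pow_nat]
    simp [nmZ]
  | negSucc k =>
    rw [zpow_negSucc, gen_pow_nat]
    have h4 : (Multiplicative.ofAdd ((k + 1 : ℕ) : ℤ))⁻¹
        = Multiplicative.ofAdd (Int.negSucc k) := by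
      rw [← ofAdd_neg, Int.negSucc_eq]
      push_cast
      ring_nf
    have h2 : (-(Int.negSucc k)).toNat = k + 1 := by
      rw [Int.negSucc_eq]
      omega
    ext
    · rw [SemidirectProduct.inv_left, h4, phi_apply, nmZ,
        if_neg (by rw [Int.negSucc_eq]; omega), h2]
    · rw [SemidirectProduct.inv_right, h4]

lemma nmZ_add (a b : ℤ) :
    nmZ σ (a + b) x = nmZ σ a x * (σ ^ a) (nmZ σ b x) := by
  have h := congrArg SemidirectProduct.left (zpow_add (gen σ x) a b)
  rw [gen_zpow, gen_zpow, gen_zpow, SemidirectProduct.mul_left] at h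
  simpa using h

lemma nmZ_natCast (k : ℕ) : nmZ σ (k : ℤ) x = nmPow σ k x := by
  simp [nmZ]

lemma nmZ_conj (h : G) (m : ℤ) :
    nmZ σ m (h⁻¹ * x * σ h) = h⁻¹ * nmZ σ m x * (σ ^ m) h := by
  have hsc : SemiconjBy (⟨h, 1⟩ : G ⋊[phi σ] Multiplicative ℤ)
      (gen σ (h⁻¹ * x * σ h)) (gen σ x) := by
    ext
    · simp [SemiconjBy, gen, SemidirectProduct.mul_left, mul_assoc, zpow_one]
    · simp [SemiconjBy, gen, SemidirectProduct.mul_right, mul_comm]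
  have h2 := congrArg SemidirectProduct.left (hsc.zpow_right m)
  rw [gen_zpow, gen_zpow, SemidirectProduct.mul_left, SemidirectProduct.mul_left] at h2
  simp only [phi_apply] at h2
  simp at h2
  conv_rhs => rw [mul_assoc]
  rw [← h2]
  group

lemma sigma_pow_nmZ (k m : ℤ) :
    (σ ^ k) (nmZ σ m x) = nmZ σ m ((σ ^ k) x) := by
  have hsc : SemiconjBy (⟨1, Multiplicative.ofAdd k⟩ : G ⋊[phi σ] Multiplicative ℤ)
      (gen σ x) (gen σ ((σ ^ k) x)) := by
    ext
    · simp [SemiconjBy, gen, SemidirectProduct.mul_left, zpow_one]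
    · simp [SemiconjBy, gen, SemidirectProduct.mul_right, mul_comm]
  have h2 := congrArg SemidirectProduct.left (hsc.zpow_right m)
  rw [gen_zpow, gen_zpow, SemidirectProduct.mul_left, SemidirectProduct.mul_left] at h2
  simpa using h2

end WeilAux

/-- Abstract setting for the cocycle lemma `b(γ₀;δ;g_p)_τ`.  `Gk = G(𝔨)` and
`Gkbar = G(𝔨̄)` with the inclusion `ι` and Frobenius `σ` on `G(𝔨)`; `W` is the
Weil group `W_{ℚ_p}` acting semilinearly on `G(𝔨̄)` via `act`, with the
canonical surjection `deg : W → ⟨σ⟩ ≅ ℤ`, `τ|_𝔨 = σ^{deg τ}`, compatibly with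
the Frobenius on `G(𝔨)` (`act_compat`). -/
structure WeilCocycleSetting where
  /-- `G` is a connected reductive group over `ℚ_p`, `𝔨` the completion of the
  maximal unramified extension of `ℚ_p`, `𝔨̄` its algebraic closure -/
  background : Prop
  /-- `G(𝔨)` -/
  Gk : Type
  [grpk : Group Gk]
  /-- `G(𝔨̄)` -/
  Gkbar : Type
  [grpkbar : Group Gkbar]
  /-- the inclusion `G(𝔨) ⊆ G(𝔨̄)` -/
  ι : Gk →* Gkbar
  /-- the Frobenius `σ` on `G(𝔨)` -/
  σ : MulAut Gk
  /-- the Weil group `W_{ℚ_p}` -/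
  W : Type
  [grpW : Group W]
  /-- the (semilinear) action of the Weil group on `G(𝔨̄)` -/
  act : W →* MulAut Gkbar
  /-- the canonical surjection `i : W_{ℚ_p} → ⟨σ⟩ ≅ ℤ` -/
  deg : W → ℤ
  deg_mul : ∀ ρ τ : W, deg (ρ * τ) = deg ρ + deg τ
  /-- on `G(𝔨)`, `τ ∈ W_{ℚ_p}` acts by `σ^{i(τ)}` -/
  act_compat : ∀ (τ : W) (x : Gk), act τ (ι x) = ι ((σ ^ deg τ) x)

attribute [instance] WeilCocycleSetting.grpk WeilCocycleSetting.grpkbar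
  WeilCocycleSetting.grpW

/-- the cochain `τ ↦ b(γ₀;δ;g_p)_τ := g_p⁻¹ · Nm_{i(τ)}δ · τ(g_p)`. -/
def weilCochain (S : WeilCocycleSetting) (δ : S.Gk) (gp : S.Gkbar) (τ : S.W) :
    S.Gkbar :=
  gp⁻¹ * S.ι (nmZ S.σ (S.deg τ) δ) * S.act τ gp

/-- **The cocycle `b(γ₀;δ;g_p)_τ`.**  If
`(γ₀, δ, g_p) ∈ G(ℚ_p) × G(L_n) × G(𝔨̄)` satisfies `g_p γ₀ g_p⁻¹ = Nm_n δ`,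
then `τ ↦ b(γ₀;δ;g_p)_τ := g_p⁻¹ · Nm_{i(τ)}δ · τ(g_p)` is a cocycle on the
Weil group `W_{ℚ_p}` with values in `G_{γ₀}(𝔨̄)` (the centralizer of `γ₀`);
and if `g_p ∈ G(𝔨)`, this cocycle coincides with the cocycle
`τ ↦ Nm_{i(τ)} b` defined by `b = g_p⁻¹ δ σ(g_p)`. -/
theorem weil_cocycle_lemma (S : WeilCocycleSetting) (hbg : S.background)
    (n : ℕ) (γ0 : S.Gkbar) (δ : S.Gk) (gp : S.Gkbar)
    (hγ0 : ∀ τ : S.W, S.act τ γ0 = γ0)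
    (hδ : (S.σ ^ n) δ = δ)
    (hconj : gp * γ0 * gp⁻¹ = S.ι (nmPow S.σ n δ)) :
    (∀ ρ τ : S.W,
      weilCochain S δ gp (ρ * τ) =
        weilCochain S δ gp ρ * S.act ρ (weilCochain S δ gp τ)) ∧
    (∀ τ : S.W, weilCochain S δ gp τ ∈ Subgroup.centralizer {γ0}) ∧
    (∀ h : S.Gk, S.ι h = gp →
      ∀ τ : S.W, weilCochain S δ gp τ = S.ι (nmZ S.σ (S.deg τ) (h⁻¹ * δ * S.σ h))) := by
  refine ⟨?_, ?_, ?_⟩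
  · intro ρ τ
    unfold weilCochain
    have hact : S.act ρ (S.act τ gp) = S.act (ρ * τ) gp := by
      rw [map_mul]; rfl
    have hcompat := S.act_compat ρ (nmZ S.σ (S.deg τ) δ)
    rw [S.deg_mul, WeilAux.nmZ_add, map_mul S.ι]
    simp only [map_mul, map_inv, hcompat, hact, mul_assoc]
    group
  · intro τ
    rw [Subgroup.mem_centralizer_iff]
    intro y hy
    rw [Set.mem_singleton_iff] at hy
    rw [hy]
    set m := S.deg τ with hm
    have hγconj : γ0 = gp⁻¹ * S.ι (nmPow S.σ n δ) * gp := by rw [← hconj]; group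
    have key : S.act τ gp * γ0 = S.ι ((S.σ ^ m) (nmPow S.σ n δ)) * S.act τ gp := by
      have h1 := congrArg (S.act τ) hconj
      rw [map_mul, map_mul, map_inv, hγ0 τ, S.act_compat, ← hm] at h1
      calc S.act τ gp * γ0
          = (S.act τ gp * γ0 * (S.act τ gp)⁻¹) * S.act τ gp := by group
        _ = _ := by rw [h1]
    have mid : nmZ S.σ m δ * (S.σ ^ m) (nmPow S.σ n δ)
        = nmPow S.σ n δ * nmZ S.σ m δ := by
      have h1 := WeilAux.nmZ_add S.σ δ m n
      have h2 := WeilAux.nmZ_add S.σ δ n m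
      rw [WeilAux.nmZ_natCast] at h1 h2
      rw [WeilAux.sigma_pow_nmZ, zpow_natCast, hδ, add_comm (n : ℤ) m] at h2
      exact h1.symm.trans h2
    show γ0 * weilCochain S δ gp τ = weilCochain S δ gp τ * γ0
    unfold weilCochain
    rw [← hm]
    calc γ0 * (gp⁻¹ * S.ι (nmZ S.σ m δ) * S.act τ gp)
        = (gp⁻¹ * S.ι (nmPow S.σ n δ) * gp) *
            (gp⁻¹ * S.ι (nmZ S.σ m δ) * S.act τ gp) := by rw [← hγconj]
      _ = gp⁻¹ * (S.ι (nmPow S.σ n δ) * S.ι (nmZ S.σ m δ)) * S.act τ gp := by group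
      _ = gp⁻¹ * (S.ι (nmZ S.σ m δ) * S.ι ((S.σ ^ m) (nmPow S.σ n δ))) *
            S.act τ gp := by rw [← map_mul, ← map_mul, mid]
      _ = gp⁻¹ * S.ι (nmZ S.σ m δ) * (S.act τ gp * γ0) := by rw [key]; group
      _ = _ := by group
  · intro h hh τ
    unfold weilCochain
    rw [← hh, ← map_inv, S.act_compat, ← map_mul, ← map_mul, WeilAux.nmZ_conj]
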